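/- arXiv:1504.00029 — 2 statements merged into one kernel-verified Lean document; each statement's English description precedes it below -/
import Mathlib

section
/- Let (V, ‖·‖) be a normed vector space, H a group of norm-preserving linear maps of V, and L : H → ℝ a group-norm. Suppose (V, H, L) is a holonomic space, i.e., for every u ∈ V there is R > 0 such that for all v, w ∈ V with ‖u−v‖, ‖u−w‖ < R and all a ∈ H one has ‖v−w‖² − ‖av−w‖² ≤ L(a)². Then the function d_L(u,v) = inf_{a∈H} √(L(a)² + ‖u − av‖²) is a metric on V. -/
/-!
Symmetry of `d_L` comes from `L(a⁻¹) = L(a)` and the invariance of the norm, the triangle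
inequality from the subadditivity of `L`, the triangle inequality in `V` and Minkowski's
inequality in `ℝ²`. Only definiteness needs holonomy: at `u = 0` with `w = a v` it says
`‖v - a v‖ ≤ L(a)` for small `v`, so by linearity `‖v - a v‖ ≤ (2‖v‖/R) L(a)` for all `v`,
whence `‖u - v‖ ≤ (1 + 2‖v‖/R) d_L(u, v)`.
-/

theorem Real.sqrt_add_sq_add_add_sq_le (p q x y : ℝ) :
    √((p + q) ^ 2 + (x + y) ^ 2) ≤ √(p ^ 2 + x ^ 2) + √(q ^ 2 + y ^ 2) := by
  have hB : √(p ^ 2 + x ^ 2) ^ 2 = p ^ 2 + x ^ 2 := Real.sq_sqrt (by positivity)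
  have hC : √(q ^ 2 + y ^ 2) ^ 2 = q ^ 2 + y ^ 2 := Real.sq_sqrt (by positivity)
  have cauchySchwarz : |p * q + x * y| ≤ √(p ^ 2 + x ^ 2) * √(q ^ 2 + y ^ 2) := by
    rw [← Real.sqrt_mul (by positivity)]
    exact Real.abs_le_sqrt (by nlinarith [sq_nonneg (p * y - x * q)])
  rw [Real.sqrt_le_iff]
  refine ⟨by positivity, ?_⟩
  nlinarith [le_abs_self (p * q + x * y)]

namespace LinearIsometryEquiv

variable {R E : Type*} [Semiring R] [SeminormedAddCommGroup E] [Module R E]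

instance applyMulAction : MulAction (E ≃ₗᵢ[R] E) E where
  smul f x := f x
  one_smul _ := rfl
  mul_smul _ _ _ := rfl

instance isIsometricSMul : IsIsometricSMul (E ≃ₗᵢ[R] E) E := ⟨fun f => f.isometry⟩

end LinearIsometryEquiv

instance Subgroup.isIsometricSMul {G X : Type*} [Group G] [PseudoEMetricSpace X] [SMul G X]
    [IsIsometricSMul G X] (S : Subgroup G) : IsIsometricSMul S X :=
  ⟨fun s => isometry_smul X (s : G)⟩

namespace GroupSeminorm

variable {G : Type*} [Group G] (L : GroupSeminorm G)

section PseudoMetricSpace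

variable {X : Type*} [PseudoMetricSpace X] [MulAction G X]

noncomputable def holonomicDist (x y : X) : ℝ := ⨅ g : G, √(L g ^ 2 + dist x (g • y) ^ 2)

theorem holonomicDist_nonneg (x y : X) : 0 ≤ L.holonomicDist x y :=
  Real.iInf_nonneg fun _ => Real.sqrt_nonneg _

theorem holonomicDist_le (x y : X) (g : G) :
    L.holonomicDist x y ≤ √(L g ^ 2 + dist x (g • y) ^ 2) :=
  ciInf_le ⟨0, by rintro _ ⟨g, rfl⟩; exact Real.sqrt_nonneg _⟩ g

theorem holonomicDist_self (x : X) : L.holonomicDist x x = 0 :=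
  le_antisymm (by simpa using L.holonomicDist_le x x 1) (L.holonomicDist_nonneg x x)

theorem dist_le_mul_holonomicDist {K : ℝ} (hK : 0 ≤ K) {x y : X}
    (hy : ∀ g : G, dist y (g • y) ≤ K * L g) :
    dist x y ≤ (1 + K) * L.holonomicDist x y := by
  rw [holonomicDist, Real.mul_iInf_of_nonneg (by positivity)]
  refine le_ciInf fun g => ?_
  have hLg : L g ≤ √(L g ^ 2 + dist x (g • y) ^ 2) :=
    Real.le_sqrt_of_sq_le (le_add_of_nonneg_right (sq_nonneg _))
  have hdist : dist x (g • y) ≤ √(L g ^ 2 + dist x (g • y) ^ 2) :=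
    Real.le_sqrt_of_sq_le (le_add_of_nonneg_left (sq_nonneg _))
  calc dist x y ≤ dist x (g • y) + dist y (g • y) := dist_triangle_right _ _ _
    _ ≤ dist x (g • y) + K * L g := by gcongr; exact hy g
    _ ≤ (1 + K) * √(L g ^ 2 + dist x (g • y) ^ 2) := by nlinarith

variable [IsIsometricSMul G X]

theorem holonomicDist_comm (x y : X) : L.holonomicDist x y = L.holonomicDist y x := by
  rw [holonomicDist, ← (Equiv.inv G).iInf_comp, holonomicDist]
  refine iInf_congr fun g => ?_
  rw [Equiv.inv_apply, map_inv_eq_map, ← dist_smul g, smul_inv_smul, dist_comm]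

theorem holonomicDist_triangle (x y z : X) :
    L.holonomicDist x z ≤ L.holonomicDist x y + L.holonomicDist y z := by
  refine le_ciInf_add_ciInf fun g h => ?_
  have hL : L (g * h) ≤ L g + L h := map_mul_le_add L g h
  have hdist : dist x ((g * h) • z) ≤ dist x (g • y) + dist y (h • z) := by
    rw [mul_smul, ← dist_smul g y]
    exact dist_triangle _ _ _
  calc L.holonomicDist x z ≤ √(L (g * h) ^ 2 + dist x ((g * h) • z) ^ 2) :=
        L.holonomicDist_le x z (g * h)
    _ ≤ √((L g + L h) ^ 2 + (dist x (g • y) + dist y (h • z)) ^ 2) := by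
        gcongr
    _ ≤ √(L g ^ 2 + dist x (g • y) ^ 2) + √(L h ^ 2 + dist y (h • z) ^ 2) :=
        Real.sqrt_add_sq_add_add_sq_le _ _ _ _

end PseudoMetricSpace

theorem holonomicDist_eq_zero_iff {X : Type*} [MetricSpace X] [MulAction G X] {K : ℝ}
    (hK : 0 ≤ K) {x y : X} (hy : ∀ g : G, dist y (g • y) ≤ K * L g) :
    L.holonomicDist x y = 0 ↔ x = y :=
  ⟨fun h => dist_le_zero.1 (by simpa [h] using L.dist_le_mul_holonomicDist (x := x) hK hy),
    fun h => h ▸ L.holonomicDist_self y⟩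

end GroupSeminorm

theorem LinearMap.norm_apply_le_of_ball_bound {V W : Type*} [NormedAddCommGroup V]
    [NormedSpace ℝ V] [SeminormedAddCommGroup W] [NormedSpace ℝ W] (f : V →ₗ[ℝ] W) {r c : ℝ}
    (hr : 0 < r) (h : ∀ z ∈ Metric.ball (0 : V) r, ‖f z‖ ≤ c) (z : V) :
    ‖f z‖ ≤ 2 * ‖z‖ / r * c := by
  rcases eq_or_ne z 0 with rfl | hz
  · simp
  have hz' : 0 < ‖z‖ := norm_pos_iff.2 hz
  set t := r / (2 * ‖z‖) with ht_def
  have ht : 0 < t := by positivity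
  have htz : t • z ∈ Metric.ball (0 : V) r := by
    rw [mem_ball_zero_iff, norm_smul, Real.norm_of_nonneg ht.le, ht_def]
    field_simp
    linarith
  have hbound := h _ htz
  rw [map_smul, norm_smul, Real.norm_of_nonneg ht.le] at hbound
  calc ‖f z‖ = t * ‖f z‖ / t := by field_simp
    _ ≤ c / t := by gcongr
    _ = 2 * ‖z‖ / r * c := by rw [ht_def]; field_simp

theorem stmt2_general (V : Type*) [NormedAddCommGroup V] [NormedSpace ℝ V]
    (H : Subgroup (V ≃ₗᵢ[ℝ] V)) (L : H → ℝ)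
    (hLid : ∀ a, L a = 0 ↔ a = 1)
    (hLinv : ∀ a, L a⁻¹ = L a)
    (hLmul : ∀ a b, L (a * b) ≤ L a + L b)
    (hol : ∀ u : V, ∃ R > (0:ℝ), ∀ v w : V, ‖u - v‖ < R → ‖u - w‖ < R →
      ∀ a : H, ‖v - w‖ ^ 2 - ‖(a : V ≃ₗᵢ[ℝ] V) v - w‖ ^ 2 ≤ (L a) ^ 2) :
    let d : V → V → ℝ :=
      fun u v => ⨅ a : H, Real.sqrt ((L a) ^ 2 + ‖u - (a : V ≃ₗᵢ[ℝ] V) v‖ ^ 2)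
    (∀ u v, 0 ≤ d u v) ∧
    (∀ u v, d u v = 0 ↔ u = v) ∧
    (∀ u v, d u v = d v u) ∧
    (∀ u v w, d u w ≤ d u v + d v w) := by
  intro d
  let N : GroupSeminorm H :=
    { toFun := L, map_one' := (hLid 1).2 rfl, mul_le' := hLmul, inv' := hLinv }
  have hd : d = N.holonomicDist := by
    funext u v
    simp only [d, GroupSeminorm.holonomicDist, dist_eq_norm]
    rfl
  obtain ⟨R, hR, hRspec⟩ := hol 0
  have hdisplacement (a : H) (v : V) : dist v (a • v) ≤ 2 * ‖v‖ / R * N a := by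
    rw [dist_eq_norm]
    refine (LinearMap.id - (a : V ≃ₗᵢ[ℝ] V).toLinearMap).norm_apply_le_of_ball_bound hR
      (fun x hx => ?_) v
    rw [mem_ball_zero_iff] at hx
    have hxa := hRspec x ((a : V ≃ₗᵢ[ℝ] V) x) (by simpa using hx) (by simpa using hx) a
    rw [sub_self, norm_zero, zero_pow two_ne_zero, sub_zero] at hxa
    exact (pow_le_pow_iff_left₀ (norm_nonneg _) (apply_nonneg N a) two_ne_zero).1 hxa
  rw [hd]
  exact ⟨N.holonomicDist_nonneg,
    fun u v => N.holonomicDist_eq_zero_iff (by positivity) (hdisplacement · v),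
    N.holonomicDist_comm, N.holonomicDist_triangle⟩

/-- Let `(V,‖·‖)` be a normed vector space, `H` a group of norm-preserving
linear maps of `V`, and `L : H → ℝ` a group-norm (nonnegative, vanishing exactly at the
identity, symmetric under inverses, subadditive).  If `(V,H,L)` is a holonomic space,
i.e. every `u ∈ V` has an `R > 0` with
`‖v−w‖² − ‖a v − w‖² ≤ L(a)²` whenever `‖u−v‖,‖u−w‖ < R` and `a ∈ H`, then
`d_L(u,v) = inf_{a ∈ H} √(L(a)² + ‖u − a v‖²)` is a metric on `V`. -/
theorem stmt2 (V : Type*) [NormedAddCommGroup V] [NormedSpace ℝ V]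
    (H : Subgroup (V ≃ₗᵢ[ℝ] V)) (L : H → ℝ)
    (hL0 : ∀ a, 0 ≤ L a)
    (hLid : ∀ a, L a = 0 ↔ a = 1)
    (hLinv : ∀ a, L a⁻¹ = L a)
    (hLmul : ∀ a b, L (a * b) ≤ L a + L b)
    (hol : ∀ u : V, ∃ R > (0:ℝ), ∀ v w : V, ‖u - v‖ < R → ‖u - w‖ < R →
      ∀ a : H, ‖v - w‖ ^ 2 - ‖(a : V ≃ₗᵢ[ℝ] V) v - w‖ ^ 2 ≤ (L a) ^ 2) :
    let d : V → V → ℝ :=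
      fun u v => ⨅ a : H, Real.sqrt ((L a) ^ 2 + ‖u - (a : V ≃ₗᵢ[ℝ] V) v‖ ^ 2)
    (∀ u v, 0 ≤ d u v) ∧
    (∀ u v, d u v = 0 ↔ u = v) ∧
    (∀ u v, d u v = d v u) ∧
    (∀ u v w, d u w ≤ d u v + d v w) :=
  stmt2_general V H L hLid hLinv hLmul hol
end

section
/- Let α_n : [0,1] → M be a sequence of smooth curves in a Riemannian manifold converging in the C¹ sense to a curve α. Then the parallel transport maps P^{α_n} : T_{α_n(0)}M → T_{α_n(1)}M converge to the parallel transport P^α along α (after identifying nearby tangent spaces via parallel transport along minimizing geodesics). -/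
/-!
In a chart, parallel transport along a curve `γ` solves the linear equation `P' = A P` with
coefficient `A t = -Γ (γ t) (γ' t)`. `C¹` convergence of the curves means uniform convergence
of their `1`-jets `(γ, γ')`; since `Γ` is uniformly continuous on a compact neighbourhood of
the limit jet, the coefficients converge uniformly. Grönwall's inequality applied to `P_n - P`,
whose derivative is `A_n (P_n - P) + (A_n - A) P`, then bounds `‖P_n - P‖` by a constant
multiple of `sup ‖A_n - A‖`.
-/

open Set Filter Topology Metric

theorem gronwallBound_mul_mul (c δ K ε x : ℝ) :
    gronwallBound (c * δ) K (c * ε) x = c * gronwallBound δ K ε x := by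
  unfold gronwallBound
  split_ifs <;> ring

theorem Continuous.comp_tendstoUniformlyOn_of_isCompact {ι X Y α : Type*}
    [PseudoMetricSpace X] [ProperSpace X] [UniformSpace Y] {l : Filter ι}
    {F : ι → α → X} {f : α → X} {s : Set α} {Φ : X → Y}
    (hΦ : Continuous Φ) (hf : IsCompact (f '' s)) (hF : TendstoUniformlyOn F f l s) :
    TendstoUniformlyOn (fun i a => Φ (F i a)) (fun a => Φ (f a)) l s := by
  have hT : IsCompact (cthickening 1 (f '' s)) := hf.cthickening
  refine (hT.uniformContinuousOn_of_continuous hΦ.continuousOn).comp_tendstoUniformlyOn_eventually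
    ?_ (fun a ha => self_subset_cthickening _ (mem_image_of_mem f ha)) hF
  filter_upwards [tendstoUniformlyOn_iff.1 hF 1 one_pos] with i hi a ha
  exact mem_cthickening_of_dist_le _ (f a) 1 _ (mem_image_of_mem f ha)
    (dist_comm (f a) (F i a) ▸ (hi a ha).le)

section LinearODE

variable {R : Type*} [NormedRing R] [NormedSpace ℝ R]

theorem norm_sub_le_gronwallBound_of_hasDerivAt_mul
    {A B P Q : ℝ → R} {a b δ₀ K δ C : ℝ}
    (hP : ∀ t ∈ Icc a b, HasDerivAt P (A t * P t) t)
    (hQ : ∀ t ∈ Icc a b, HasDerivAt Q (B t * Q t) t)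
    (hPQ : ‖P a - Q a‖ ≤ δ₀) (hA : ∀ t ∈ Icc a b, ‖A t‖ ≤ K)
    (hAB : ∀ t ∈ Icc a b, ‖A t - B t‖ ≤ δ) (hQC : ∀ t ∈ Icc a b, ‖Q t‖ ≤ C) :
    ∀ t ∈ Icc a b, ‖P t - Q t‖ ≤ gronwallBound δ₀ K (δ * C) (t - a) := by
  have hderiv : ∀ t ∈ Icc a b, HasDerivAt (fun t => P t - Q t) (A t * P t - B t * Q t) t :=
    fun t ht => (hP t ht).sub (hQ t ht)
  refine norm_le_gronwallBound_of_norm_deriv_right_le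
    (fun t ht => (hderiv t ht).continuousAt.continuousWithinAt)
    (fun t ht => (hderiv t (Ico_subset_Icc_self ht)).hasDerivWithinAt) hPQ ?_
  intro t ht
  replace ht := Ico_subset_Icc_self ht
  have hsplit : A t * P t - B t * Q t = A t * (P t - Q t) + (A t - B t) * Q t := by noncomm_ring
  calc ‖A t * P t - B t * Q t‖
      ≤ ‖A t‖ * ‖P t - Q t‖ + ‖A t - B t‖ * ‖Q t‖ := by
        rw [hsplit]
        exact (norm_add_le _ _).trans (add_le_add (norm_mul_le _ _) (norm_mul_le _ _))
    _ ≤ K * ‖P t - Q t‖ + δ * C := by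
        gcongr
        · exact hA t ht
        · exact (norm_nonneg _).trans (hAB t ht)
        · exact hAB t ht
        · exact hQC t ht

theorem tendstoUniformlyOn_of_hasDerivAt_mul {ι : Type*} {l : Filter ι}
    {A : ι → ℝ → R} {A₀ : ℝ → R} {P : ι → ℝ → R} {P₀ : ℝ → R} {a b : ℝ}
    (hA : TendstoUniformlyOn A A₀ l (Icc a b)) (hA₀ : ContinuousOn A₀ (Icc a b))
    (hP : ∀ i, ∀ t ∈ Icc a b, HasDerivAt (P i) (A i t * P i t) t)
    (hP₀ : ∀ t ∈ Icc a b, HasDerivAt P₀ (A₀ t * P₀ t) t)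
    (hinit : Tendsto (fun i => P i a) l (𝓝 (P₀ a))) :
    TendstoUniformlyOn P P₀ l (Icc a b) := by
  obtain hba | hab := lt_or_ge b a
  · rw [Icc_eq_empty_of_lt hba]; exact tendstoUniformlyOn_empty
  have ha : a ∈ Icc a b := left_mem_Icc.2 hab
  obtain ⟨K₀, hK₀⟩ := isCompact_Icc.exists_bound_of_continuousOn hA₀
  obtain ⟨C, hC⟩ := isCompact_Icc.exists_bound_of_continuousOn
    (fun t ht => (hP₀ t ht).continuousAt.continuousWithinAt)
  have hK₀_nonneg : 0 ≤ K₀ := (norm_nonneg _).trans (hK₀ a ha)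
  have hC_nonneg : 0 ≤ C := (norm_nonneg _).trans (hC a ha)
  set K := K₀ + 1
  set G := gronwallBound 1 K C (b - a)
  have hG : 1 ≤ G := by
    simpa [gronwallBound_x0] using
      gronwallBound_mono zero_le_one hC_nonneg (by positivity) (sub_nonneg.2 hab)
  rw [tendstoUniformlyOn_iff]
  intro ε hε
  set η := ε / (2 * G)
  have hη : 0 < η := by positivity
  filter_upwards [tendstoUniformlyOn_iff.1 hA η hη,
    tendstoUniformlyOn_iff.1 hA 1 one_pos, tendsto_nhds.1 hinit η hη]
    with i hAη hA1 hPa t ht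
  have hAK : ∀ t ∈ Icc a b, ‖A i t‖ ≤ K := fun t ht =>
    calc ‖A i t‖ ≤ ‖A₀ t‖ + dist (A₀ t) (A i t) := by
          rw [dist_comm, dist_eq_norm]; exact norm_le_norm_add_norm_sub' _ _
      _ ≤ K := add_le_add (hK₀ t ht) (hA1 t ht).le
  calc dist (P₀ t) (P i t) = ‖P i t - P₀ t‖ := by rw [dist_comm, dist_eq_norm]
    _ ≤ gronwallBound η K (η * C) (t - a) :=
        norm_sub_le_gronwallBound_of_hasDerivAt_mul (hP i) hP₀
          (by rw [← dist_eq_norm]; exact hPa.le) hAK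
          (fun t ht => by rw [← dist_eq_norm, dist_comm]; exact (hAη t ht).le) hC t ht
    _ ≤ gronwallBound η K (η * C) (b - a) :=
        gronwallBound_mono hη.le (by positivity) (by positivity) (by linarith [ht.2])
    _ = η * G := by simpa using gronwallBound_mul_mul η 1 K C (b - a)
    _ < ε := by
        simp only [η]
        field_simp
        linarith

end LinearODE

theorem stmt13_general (d : ℕ)
    (Γ : EuclideanSpace ℝ (Fin d) →
      (EuclideanSpace ℝ (Fin d) →L[ℝ]
        (EuclideanSpace ℝ (Fin d) →L[ℝ] EuclideanSpace ℝ (Fin d))))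
    (hΓ : Continuous Γ)
    (α : ℕ → ℝ → EuclideanSpace ℝ (Fin d)) (α' : ℕ → ℝ → EuclideanSpace ℝ (Fin d))
    (β : ℝ → EuclideanSpace ℝ (Fin d)) (β' : ℝ → EuclideanSpace ℝ (Fin d))
    (hβ : ∀ t ∈ Icc (0:ℝ) 1, HasDerivAt β (β' t) t)
    (hβ' : ContinuousOn β' (Icc 0 1))
    (hC0 : TendstoUniformlyOn α β atTop (Icc 0 1))
    (hC1 : TendstoUniformlyOn α' β' atTop (Icc 0 1))
    (Pn : ℕ → ℝ →
      (EuclideanSpace ℝ (Fin d) →L[ℝ] EuclideanSpace ℝ (Fin d)))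
    (Pβ : ℝ → (EuclideanSpace ℝ (Fin d) →L[ℝ] EuclideanSpace ℝ (Fin d)))
    (hPn0 : ∀ n, Pn n 0 = 1)
    (hPnode : ∀ n, ∀ t ∈ Icc (0:ℝ) 1,
      HasDerivAt (Pn n) (-(Γ (α n t) (α' n t) * Pn n t)) t)
    (hPβ0 : Pβ 0 = 1)
    (hPβode : ∀ t ∈ Icc (0:ℝ) 1,
      HasDerivAt Pβ (-(Γ (β t) (β' t) * Pβ t)) t) :
    Tendsto (fun n => Pn n 1) atTop (nhds (Pβ 1)) := by
  set Φ : EuclideanSpace ℝ (Fin d) × EuclideanSpace ℝ (Fin d) →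
      (EuclideanSpace ℝ (Fin d) →L[ℝ] EuclideanSpace ℝ (Fin d)) := fun p => -Γ p.1 p.2
  have hΦ : Continuous Φ := ((hΓ.comp continuous_fst).clm_apply continuous_snd).neg
  have hβc : ContinuousOn β (Icc 0 1) := fun t ht => (hβ t ht).continuousAt.continuousWithinAt
  have hββ' : ContinuousOn (fun t => (β t, β' t)) (Icc 0 1) := hβc.prodMk hβ'
  have hjet : TendstoUniformlyOn (fun n t => (α n t, α' n t)) (fun t => (β t, β' t)) atTop
      (Icc 0 1) := fun u hu => tendsto_diag.eventually (hC0.prodMk hC1 u hu)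
  have hPn : TendstoUniformlyOn Pn Pβ atTop (Icc 0 1) :=
    tendstoUniformlyOn_of_hasDerivAt_mul
      (hΦ.comp_tendstoUniformlyOn_of_isCompact (isCompact_Icc.image_of_continuousOn hββ') hjet)
      (hΦ.comp_continuousOn hββ')
      (fun n t ht => (hPnode n t ht).congr_deriv (neg_mul (Γ (α n t) (α' n t)) _).symm)
      (fun t ht => (hPβode t ht).congr_deriv (neg_mul (Γ (β t) (β' t)) _).symm)
      (by simp only [hPn0, hPβ0, tendsto_const_nhds])
  exact hPn.tendsto_at (right_mem_Icc.2 zero_le_one)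

/-- Parallel transport depends continuously on `C¹` convergence of
curves.  In a fixed chart the Riemannian manifold is modelled on `E = ℝ^d`, the
Levi-Civita connection by its continuous Christoffel operator `Γ x : E →L (E →L E)`
(bilinear in velocity and transported vector), and parallel transport along a curve `α`
by the solution of `Pα' = −Γ(α)(α')·Pα`, `Pα(0) = 1`.  If smooth curves `α n` converge,
together with their derivatives, uniformly on `[0,1]` to `α` (C¹ convergence), then the
parallel transports `P n 1` converge to the parallel transport `Pα 1` along `α`. -/
theorem stmt13 (d : ℕ)
    (Γ : EuclideanSpace ℝ (Fin d) →
      (EuclideanSpace ℝ (Fin d) →L[ℝ]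
        (EuclideanSpace ℝ (Fin d) →L[ℝ] EuclideanSpace ℝ (Fin d))))
    (hΓ : Continuous Γ)
    (α : ℕ → ℝ → EuclideanSpace ℝ (Fin d)) (α' : ℕ → ℝ → EuclideanSpace ℝ (Fin d))
    (β : ℝ → EuclideanSpace ℝ (Fin d)) (β' : ℝ → EuclideanSpace ℝ (Fin d))
    (hα : ∀ n, ∀ t ∈ Icc (0:ℝ) 1, HasDerivAt (α n) (α' n t) t)
    (hα' : ∀ n, ContinuousOn (α' n) (Icc 0 1))
    (hβ : ∀ t ∈ Icc (0:ℝ) 1, HasDerivAt β (β' t) t)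
    (hβ' : ContinuousOn β' (Icc 0 1))
    (hC0 : TendstoUniformlyOn α β atTop (Icc 0 1))
    (hC1 : TendstoUniformlyOn α' β' atTop (Icc 0 1))
    (Pn : ℕ → ℝ →
      (EuclideanSpace ℝ (Fin d) →L[ℝ] EuclideanSpace ℝ (Fin d)))
    (Pβ : ℝ → (EuclideanSpace ℝ (Fin d) →L[ℝ] EuclideanSpace ℝ (Fin d)))
    (hPn0 : ∀ n, Pn n 0 = 1)
    (hPnode : ∀ n, ∀ t ∈ Icc (0:ℝ) 1,
      HasDerivAt (Pn n) (-(Γ (α n t) (α' n t) * Pn n t)) t)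
    (hPβ0 : Pβ 0 = 1)
    (hPβode : ∀ t ∈ Icc (0:ℝ) 1,
      HasDerivAt Pβ (-(Γ (β t) (β' t) * Pβ t)) t) :
    Tendsto (fun n => Pn n 1) atTop (nhds (Pβ 1)) :=
  stmt13_general d Γ hΓ α α' β β' hβ hβ' hC0 hC1 Pn Pβ hPn0 hPnode hPβ0 hPβode
end
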